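/- More generally, in any finite-dimensional unital normed algebra over ℂ (or any unital Banach algebra), the identity element 1 is not a commutator of two elements scaled by a nonzero constant: if a,b are elements of a unital Banach algebra with ab − ba = 1, a contradiction follows. -/
import Mathlib


theorem wintner_wielandt {A : Type*} [NormedRing A] [NormedAlgebra ℂ A]
    [CompleteSpace A] [NormOneClass A] :
    ¬ ∃ a b : A, a * b - b * a = 1 := by
  rintro ⟨a, b, h⟩
  -- key identity
  have key : ∀ n : ℕ, a * b ^ (n + 1) - b ^ (n + 1) * a = ((n : ℂ) + 1) • b ^ n := by
    intro n
    induction n with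
    | zero => simpa using h
    | succ n ih =>
      have : a * b ^ (n + 2) - b ^ (n + 2) * a
          = (a * b ^ (n + 1) - b ^ (n + 1) * a) * b + b ^ (n + 1) * (a * b - b * a) := by
        noncomm_ring
      rw [this, ih, h]
      push_cast
      rw [smul_mul_assoc, mul_one]
      rw [← pow_succ]
      module
  -- b ^ n = 0 for large n
  have hzero : ∀ n : ℕ, b ^ n = 0 → b ^ 0 = 0 := by
    intro n
    induction n with
    | zero => exact id
    | succ n ih =>
      intro hb
      apply ih
      have hk := key n
      rw [hb, zero_mul, mul_zero, sub_zero] at hk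
      have hne : ((n : ℂ) + 1) ≠ 0 := Nat.cast_add_one_ne_zero n
      have : b ^ n = (((n : ℂ) + 1)⁻¹) • (((n : ℂ) + 1) • b ^ n) := by
        rw [smul_smul, inv_mul_cancel₀ hne, one_smul]
      rw [this, ← hk, smul_zero]
  -- find large n with b ^ n = 0
  obtain ⟨n, hn⟩ : ∃ n : ℕ, 2 * ‖a‖ * ‖b‖ < (n : ℝ) + 1 := by
    obtain ⟨n, hn⟩ := exists_nat_gt (2 * ‖a‖ * ‖b‖)
    exact ⟨n, hn.trans_le (by linarith)⟩
  have hb : b ^ n = 0 := by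
    by_contra hbne
    have hnorm : ‖((n : ℂ) + 1) • b ^ n‖ ≤ 2 * ‖a‖ * ‖b‖ * ‖b ^ n‖ := by
      rw [← key n]
      calc ‖a * b ^ (n + 1) - b ^ (n + 1) * a‖
          ≤ ‖a * b ^ (n + 1)‖ + ‖b ^ (n + 1) * a‖ := norm_sub_le _ _
        _ ≤ ‖a‖ * ‖b ^ (n + 1)‖ + ‖b ^ (n + 1)‖ * ‖a‖ := by
            gcongr <;> [exact norm_mul_le _ _; exact norm_mul_le _ _]
        _ = 2 * ‖a‖ * ‖b ^ (n + 1)‖ := by ring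
        _ ≤ 2 * ‖a‖ * (‖b ^ n‖ * ‖b‖) := by
            have := norm_mul_le (b ^ n) b
            rw [← pow_succ] at this
            exact mul_le_mul_of_nonneg_left this (by positivity)
        _ = 2 * ‖a‖ * ‖b‖ * ‖b ^ n‖ := by ring
    rw [norm_smul] at hnorm
    have h1 : ‖((n : ℂ) + 1)‖ = (n : ℝ) + 1 := by
      rw [show ((n : ℂ) + 1) = ((n + 1 : ℕ) : ℂ) by push_cast; ring,
        Complex.norm_natCast]
      push_cast; ring
    rw [h1] at hnorm
    have hpos : 0 < ‖b ^ n‖ := norm_pos_iff.mpr hbne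
    nlinarith
  have := hzero n hb
  rw [pow_zero] at this
  have hone := norm_one (α := A)
  rw [this, norm_zero] at hone
  norm_num at hone
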